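/- arXiv:2006.02544 — 2 statements merged into one kernel-verified Lean document; each statement's English description precedes it below -/
import Mathlib

section
/- If Z_1, ..., Z_{n+1} are exchangeable and almost surely distinct, then the rank of Z_{n+1} among Z_1,...,Z_{n+1} is uniformly distributed on {1,...,n+1}. -/
/-!
Exchangeability makes the events "exactly `m` of the `Z i` lie below `Z j`" equally likely for
all `j`. When the values are distinct, the number of values below `Z j` is a bijection from the
indices onto `{0, …, n}`, so for each `m` exactly one `j` has `m` values below it: almost surely
these `n + 1` equally likely events partition the sample space, and each has probability
`1 / (n + 1)`.
-/

open MeasureTheory Finset Function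
open scoped ENNReal

section CountBelow

variable {ι α : Type*} [Fintype ι] [LinearOrder α]

def countBelow (v : ι → α) (j : ι) : ℕ := #{i | v i < v j}

lemma countBelow_lt_card (v : ι → α) (j : ι) : countBelow v j < Fintype.card ι :=
  card_lt_card (filter_ssubset.2 ⟨j, mem_univ j, lt_irrefl _⟩)

lemma countBelow_lt_countBelow {v : ι → α} {a b : ι} (h : v a < v b) :
    countBelow v a < countBelow v b := by
  refine card_lt_card ((ssubset_iff_of_subset fun i hi => ?_).2 ⟨a, ?_, ?_⟩)
  · simp only [mem_filter, mem_univ, true_and] at hi ⊢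
    exact hi.trans h
  · simpa using h
  · simp

lemma countBelow_injective {v : ι → α} (hv : Injective v) :
    Injective (countBelow v) := by
  intro a b hab
  by_contra hne
  rcases (hv.ne hne).lt_or_gt with h | h
  · exact (countBelow_lt_countBelow h).ne hab
  · exact (countBelow_lt_countBelow h).ne' hab

lemma existsUnique_countBelow_eq {v : ι → α} (hv : Injective v) {m : ℕ}
    (hm : m < Fintype.card ι) : ∃! j, countBelow v j = m := by
  let f : ι → Fin (Fintype.card ι) := fun j => ⟨countBelow v j, countBelow_lt_card v j⟩
  have hf : Bijective f :=
    (Fintype.bijective_iff_injective_and_card f).2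
      ⟨fun a b h => countBelow_injective hv (congrArg Fin.val h), (Fintype.card_fin _).symm⟩
  simpa [f, Fin.ext_iff] using hf.existsUnique ⟨m, hm⟩

lemma countBelow_comp_perm (v : ι → α) (σ : Equiv.Perm ι) (j : ι) :
    countBelow (v ∘ σ) j = countBelow v (σ j) :=
  card_equiv σ (by simp)

lemma countBelow_last {n : ℕ} (v : Fin (n + 1) → α) :
    countBelow v (Fin.last n) = #{i : Fin n | v i.castSucc < v (Fin.last n)} := by
  rw [countBelow, card_filter, card_filter, Fin.sum_univ_castSucc]
  simp

lemma measurable_countBelow [TopologicalSpace α] [MeasurableSpace α] [OpensMeasurableSpace α]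
    [OrderClosedTopology α] [SecondCountableTopology α] (j : ι) :
    Measurable fun v : ι → α => countBelow v j := by
  simp only [countBelow, card_filter]
  exact Finset.measurable_sum _ fun i _ => Measurable.ite
    (measurableSet_lt (measurable_pi_apply i) (measurable_pi_apply j))
    measurable_const measurable_const

end CountBelow

section Exchangeable

variable {Ω ι α : Type*} [MeasurableSpace Ω] {μ : Measure Ω}

lemma ae_injective_of_measure_eq_zero [Countable ι] {X : ι → Ω → α}
    (h : ∀ i j, i ≠ j → μ {ω | X i ω = X j ω} = 0) :
    ∀ᵐ ω ∂μ, Injective fun i => X i ω := by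
  have hne : ∀ i j, ∀ᵐ ω ∂μ, i ≠ j → X i ω ≠ X j ω := fun i j => by
    by_cases hij : i = j
    · simp [hij]
    · exact (measure_eq_zero_iff_ae_notMem.1 (h i j hij)).mono fun ω hω _ => hω
  filter_upwards [ae_all_iff.2 fun i => ae_all_iff.2 (hne i)] with ω hω i j hij
  by_contra hne
  exact hω i j hne hij

variable [Fintype ι] [LinearOrder α] [TopologicalSpace α] [MeasurableSpace α]
  [OpensMeasurableSpace α] [OrderClosedTopology α] [SecondCountableTopology α]
  {X : Ω → ι → α}

lemma measurableSet_countBelow_eq (hX : Measurable X) (j : ι) (m : ℕ) :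
    MeasurableSet {ω | countBelow (X ω) j = m} :=
  (measurable_countBelow j).comp hX (measurableSet_singleton m)

lemma measure_countBelow_eq_of_exchangeable (hX : Measurable X)
    (hexch : ∀ σ : Equiv.Perm ι, μ.map (fun ω => X ω ∘ σ) = μ.map X) (i j : ι) (m : ℕ) :
    μ {ω | countBelow (X ω) i = m} = μ {ω | countBelow (X ω) j = m} := by
  classical
  let σ := Equiv.swap i j
  have hXσ : Measurable fun ω => X ω ∘ σ := measurable_pi_lambda _ fun l => hX.eval
  have hS : MeasurableSet {v : ι → α | countBelow v j = m} :=
    measurableSet_countBelow_eq measurable_id j m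
  have hpre :
      {ω | countBelow (X ω) i = m} = (fun ω => X ω ∘ σ) ⁻¹' {v | countBelow v j = m} := by
    ext ω
    simp [countBelow_comp_perm, σ]
  rw [hpre, ← Measure.map_apply hXσ hS, hexch, Measure.map_apply hX hS]
  rfl

lemma sum_measure_countBelow_eq (hX : Measurable X) (hinj : ∀ᵐ ω ∂μ, Injective (X ω))
    {m : ℕ} (hm : m < Fintype.card ι) :
    ∑ j, μ {ω | countBelow (X ω) j = m} = μ Set.univ := by
  have hdisj : Pairwise (onFun (AEDisjoint μ) fun j => {ω | countBelow (X ω) j = m}) := by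
    intro a b hab
    refine measure_mono_null ?_ (ae_iff.1 hinj)
    intro ω hω hω'
    exact hab ((existsUnique_countBelow_eq hω' hm).unique hω.1 hω.2)
  have hcover : (⋃ j, {ω | countBelow (X ω) j = m}) =ᵐ[μ] Set.univ := by
    refine ae_eq_univ.2 (measure_mono_null ?_ (ae_iff.1 hinj))
    intro ω hω hω'
    obtain ⟨j, hj, -⟩ := existsUnique_countBelow_eq hω' hm
    exact hω (Set.mem_iUnion.2 ⟨j, hj⟩)
  rw [← measure_congr hcover, measure_iUnion₀ hdisj
    fun j => (measurableSet_countBelow_eq hX j m).nullMeasurableSet, tsum_fintype]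

lemma measure_countBelow_eq_inv_card [IsProbabilityMeasure μ] (hX : Measurable X)
    (hexch : ∀ σ : Equiv.Perm ι, μ.map (fun ω => X ω ∘ σ) = μ.map X)
    (hinj : ∀ᵐ ω ∂μ, Injective (X ω)) (j : ι) {m : ℕ} (hm : m < Fintype.card ι) :
    μ {ω | countBelow (X ω) j = m} = (Fintype.card ι : ℝ≥0∞)⁻¹ := by
  have hsum := sum_measure_countBelow_eq hX hinj hm
  simp only [measure_countBelow_eq_of_exchangeable hX hexch _ j, sum_const, card_univ,
    nsmul_eq_mul, measure_univ] at hsum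
  exact ENNReal.eq_inv_of_mul_eq_one_left (by rwa [mul_comm])

end Exchangeable

/-- If `Z 0, ..., Z n` are exchangeable and almost surely distinct, then the rank of
`Z n` among `Z 0, ..., Z n`, defined as `1 + #{i < n : Z i < Z n}`, is uniformly
distributed on `{1, ..., n+1}`. -/
theorem rank_uniform
    {Ω : Type*} [MeasurableSpace Ω] (ℙ : Measure Ω) [IsProbabilityMeasure ℙ]
    (n : ℕ) (Z : Fin (n + 1) → Ω → ℝ) (hZmeas : ∀ i, Measurable (Z i))
    (hexch : ∀ σ : Equiv.Perm (Fin (n + 1)),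
      Measure.map (fun ω => fun i => Z (σ i) ω) ℙ = Measure.map (fun ω => fun i => Z i ω) ℙ)
    (hdistinct : ∀ i j : Fin (n + 1), i ≠ j → ℙ {ω | Z i ω = Z j ω} = 0)
    (k : ℕ) (hk : k ∈ Finset.Icc 1 (n + 1)) :
    ℙ {ω | 1 + (Finset.univ.filter
        (fun i : Fin n => Z i.castSucc ω < Z (Fin.last n) ω)).card = k}
      = 1 / (n + 1) := by
  obtain ⟨hk1, hkn⟩ := mem_Icc.1 hk
  let X : Ω → Fin (n + 1) → ℝ := fun ω i => Z i ω
  have hrank : {ω | 1 + #{i : Fin n | Z i.castSucc ω < Z (Fin.last n) ω} = k}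
      = {ω | countBelow (X ω) (Fin.last n) = k - 1} := by
    ext ω
    simp only [Set.mem_ofPred_eq, countBelow_last, X]
    omega
  rw [hrank, measure_countBelow_eq_inv_card (measurable_pi_lambda X hZmeas) hexch
    (ae_injective_of_measure_eq_zero hdistinct) _ (by rw [Fintype.card_fin]; omega),
    Fintype.card_fin, one_div, Nat.cast_add_one]
end

section
/- With π, τ, U, Y as above, any other randomized prediction set C(U) ⊆ {1,...,C} (a measurable set-valued function of U) satisfying P[Y ∈ C(U)] ≥ τ has expected cardinality E[|C(U)|] ≥ E[|S(U;π,τ)|]; i.e., the oracle randomized set is the smallest achieving coverage τ. -/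
open MeasureTheory Finset

noncomputable section

/-- Number of labels with strictly larger probability than `y`. -/
def nAbove {C : ℕ} (π : Fin C → ℝ) (y : Fin C) : ℕ :=
  (Finset.univ.filter (fun y' => π y < π y')).card

/-- The set of labels attaining the `c` largest probabilities
(well-defined as a set of size `min c C` when the entries of `π` are distinct). -/
def topSet {C : ℕ} (π : Fin C → ℝ) (c : ℕ) : Finset (Fin C) :=
  Finset.univ.filter (fun y => nAbove π y < c)

/-- The `r`-th largest entry of `π` (0-indexed: `sortedDesc π 0 = π_(1)`),
and `0` if `r` is out of range. -/
def sortedDesc {C : ℕ} (π : Fin C → ℝ) (r : ℕ) : ℝ :=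
  if h : r < C then π ((Tuple.sort π) (Fin.rev ⟨r, h⟩)) else 0

/-- Sum of the `c` largest entries of `π`: `π_(1) + ... + π_(c)`. -/
def topSum {C : ℕ} (π : Fin C → ℝ) (c : ℕ) : ℝ :=
  ∑ r ∈ Finset.range c, sortedDesc π r

/-- Generalized conditional quantile `L(π, τ) = min {c ∈ {1,...,C} : π_(1) + ... + π_(c) ≥ τ}`. -/
def Lgen {C : ℕ} (π : Fin C → ℝ) (τ : ℝ) : ℕ :=
  sInf {c : ℕ | 1 ≤ c ∧ τ ≤ topSum π c}

/-- `V(π, τ) = (∑_{c=1}^{L(π,τ)} π_(c) − τ) / π_(L(π,τ))`. -/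
def Vgen {C : ℕ} (π : Fin C → ℝ) (τ : ℝ) : ℝ :=
  (topSum π (Lgen π τ) - τ) / sortedDesc π (Lgen π τ - 1)

/-- The randomized oracle prediction set `S(u; π, τ)`: the top `L(π,τ) − 1` labels
if `u ≤ V(π,τ)`, and the top `L(π,τ)` labels otherwise. -/
def Sgen {C : ℕ} (u : ℝ) (π : Fin C → ℝ) (τ : ℝ) : Finset (Fin C) :=
  if u ≤ Vgen π τ then topSet π (Lgen π τ - 1) else topSet π (Lgen π τ)

/-- The generalized inverse quantile conformity score
`E(y, u; π) = min {τ ∈ [0,1] : y ∈ S(u; π, τ)}`. -/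
def Egen {C : ℕ} (y : Fin C) (u : ℝ) (π : Fin C → ℝ) : ℝ :=
  sInf {τ : ℝ | τ ∈ Set.Icc (0 : ℝ) 1 ∧ y ∈ Sgen u π τ}

/-!
Write `t y = P[y ∈ C(U)] ∈ [0, 1]`, so that the coverage of `C` is `∑ π y * t y ≥ τ` and its
expected size is `∑ t y`. This is a fractional knapsack problem. With `p = π_(L)` the `L`-th
largest probability, termwise `π y * t y ≤ max (π y - p) 0 + p * t y`, and the excesses sum to
`π_(1) + ... + π_(L) - L p`; hence `p ∑ t y ≥ τ - (π_(1) + ... + π_(L)) + L p`, i.e.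
`∑ t y ≥ L - V`. The oracle set attains this value: it has `L - 1` labels with probability `V`
and `L` labels otherwise.
-/

open scoped ENNReal

lemma sum_mul_le_sum_max_sub_add {ι : Type*} [Fintype ι] (w t : ι → ℝ) (p : ℝ)
    (ht0 : ∀ i, 0 ≤ t i) (ht1 : ∀ i, t i ≤ 1) :
    ∑ i, w i * t i ≤ ∑ i, max (w i - p) 0 + p * ∑ i, t i := by
  rw [mul_sum, ← sum_add_distrib]
  gcongr with i
  nlinarith [le_max_left (w i - p) 0, le_max_right (w i - p) 0, ht0 i, ht1 i]

lemma lintegral_Icc_ite_natCast (a b : ℕ) {V : ℝ} (hV : V ∈ Set.Icc 0 1) :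
    ∫⁻ u in Set.Icc (0 : ℝ) 1, ((if u ≤ V then a else b : ℕ) : ℝ≥0∞) =
      ENNReal.ofReal (a * V + b * (1 - V)) := by
  rw [← Set.Icc_union_Ioc_eq_Icc hV.1 hV.2, lintegral_union measurableSet_Ioc
    (Set.disjoint_left.2 fun u hu hu' => (not_le.2 hu'.1) hu.2)]
  rw [setLIntegral_congr_fun measurableSet_Icc (fun u hu => by rw [if_pos hu.2]),
    setLIntegral_congr_fun measurableSet_Ioc (fun u hu => by rw [if_neg (not_le.2 hu.1)]),
    setLIntegral_const, setLIntegral_const, Real.volume_Icc, Real.volume_Ioc, sub_zero,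
    ENNReal.ofReal_add (mul_nonneg (Nat.cast_nonneg _) hV.1)
      (mul_nonneg (Nat.cast_nonneg _) (sub_nonneg.2 hV.2)),
    ENNReal.ofReal_mul (by positivity), ENNReal.ofReal_mul (by positivity),
    ENNReal.ofReal_natCast, ENNReal.ofReal_natCast]

lemma lintegral_card_eq_sum_measure {α ι : Type*} [MeasurableSpace α] [Fintype ι]
    (ν : Measure α) (s : α → Finset ι) (hs : ∀ i, MeasurableSet {a | i ∈ s a}) :
    ∫⁻ a, (#(s a) : ℝ≥0∞) ∂ν = ∑ i, ν {a | i ∈ s a} := by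
  have hcard : ∀ a, (#(s a) : ℝ≥0∞) = ∑ i, Set.indicator {x | i ∈ s x} 1 a := fun a => by
    simp [Set.indicator]
  simp_rw [hcard]
  rw [lintegral_finsetSum _ fun i _ => measurable_one.indicator (hs i)]
  simp_rw [lintegral_indicator_one (hs _)]

lemma prod_setOf_mem_eq_sum {ι α : Type*} [Fintype ι] [MeasurableSpace ι]
    [MeasurableSingletonClass ι] [MeasurableSpace α] (μ : Measure ι) (ν : Measure α) [SFinite ν]
    (s : α → Finset ι) (hs : ∀ i, MeasurableSet {a | i ∈ s a}) :
    (μ.prod ν) {q | q.1 ∈ s q.2} = ∑ i, ν {a | i ∈ s a} * μ {i} := by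
  have hunion : {q : ι × α | q.1 ∈ s q.2} = ⋃ i, {i} ×ˢ {a | i ∈ s a} := by
    ext ⟨i, a⟩
    simp
  have hmeas : MeasurableSet {q : ι × α | q.1 ∈ s q.2} :=
    hunion ▸ MeasurableSet.iUnion fun i => (measurableSet_singleton i).prod (hs i)
  rw [Measure.prod_apply hmeas, lintegral_fintype]
  rfl

section Ranking

variable {C : ℕ} {π : Fin C → ℝ}

def sortDesc (π : Fin C → ℝ) : Equiv.Perm (Fin C) :=
  Fin.revPerm.trans (Tuple.sort π)

lemma antitone_comp_sortDesc : Antitone (π ∘ sortDesc π) :=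
  (Tuple.monotone_sort π).comp_antitone Fin.rev_anti

lemma strictAnti_comp_sortDesc (hinj : Function.Injective π) : StrictAnti (π ∘ sortDesc π) :=
  antitone_comp_sortDesc.strictAnti_of_injective (hinj.comp (sortDesc π).injective)

lemma sortedDesc_of_lt {r : ℕ} (hr : r < C) : sortedDesc π r = π (sortDesc π ⟨r, hr⟩) :=
  dif_pos hr

lemma sortedDesc_le_of_le {r s : ℕ} (hrs : r ≤ s) (hs : s < C) :
    sortedDesc π s ≤ sortedDesc π r := by
  rw [sortedDesc_of_lt hs, sortedDesc_of_lt (hrs.trans_lt hs)]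
  exact antitone_comp_sortDesc (Fin.mk_le_mk.2 hrs)

lemma sum_sortedDesc_eq_sum (f : ℝ → ℝ) :
    ∑ r ∈ range C, f (sortedDesc π r) = ∑ y, f (π y) := by
  rw [← Fin.sum_univ_eq_sum_range, ← Equiv.sum_comp (sortDesc π) fun y => f (π y)]
  simp only [sortedDesc_of_lt, Fin.is_lt, Fin.eta]

lemma topSum_self : topSum π C = ∑ y, π y :=
  sum_sortedDesc_eq_sum id

lemma nAbove_sortDesc (hinj : Function.Injective π) (i : Fin C) :
    nAbove π (sortDesc π i) = i := by
  rw [nAbove, ← Fin.card_Iio i]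
  refine (card_equiv (sortDesc π) fun j => ?_).symm
  simp only [mem_Iio, mem_filter, mem_univ, true_and]
  exact (strictAnti_comp_sortDesc hinj).lt_iff_gt.symm

lemma card_topSet (hinj : Function.Injective π) (c : ℕ) : #(topSet π c) = min C c := by
  rw [← Fin.card_filter_val_lt]
  refine (card_equiv (sortDesc π) fun i => ?_).symm
  simp [topSet, nAbove_sortDesc hinj]

-- Only the top `c` entries exceed the `c`-th largest one.
lemma sum_max_sub_sortedDesc {c : ℕ} (hc : 1 ≤ c) (hcC : c ≤ C) :
    ∑ y, max (π y - sortedDesc π (c - 1)) 0 = topSum π c - c * sortedDesc π (c - 1) := by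
  set p := sortedDesc π (c - 1)
  rw [← sum_sortedDesc_eq_sum (fun x => max (x - p) 0), ← sum_range_add_sum_Ico _ hcC]
  have top : ∑ r ∈ range c, max (sortedDesc π r - p) 0 = ∑ r ∈ range c, (sortedDesc π r - p) :=
    sum_congr rfl fun r hr => max_eq_left <| sub_nonneg.2 <|
      sortedDesc_le_of_le (Nat.le_sub_one_of_lt (mem_range.1 hr)) (by omega)
  have rest : ∑ r ∈ Ico c C, max (sortedDesc π r - p) 0 = 0 :=
    sum_eq_zero fun r hr => max_eq_right <| sub_nonpos.2 <|
      sortedDesc_le_of_le (by have := (mem_Ico.1 hr).1; omega) (mem_Ico.1 hr).2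
  rw [top, rest, add_zero, sum_sub_distrib, sum_const, card_range, nsmul_eq_mul, topSum]

end Ranking

section Quantile

variable {C : ℕ} {π : Fin C → ℝ} {τ : ℝ}

lemma Lgen_spec (hτ0 : 0 < τ) (hτ : τ ≤ ∑ y, π y) :
    1 ≤ Lgen π τ ∧ Lgen π τ ≤ C ∧ τ ≤ topSum π (Lgen π τ) := by
  have hC : 1 ≤ C := by
    by_contra! h
    obtain rfl : C = 0 := by omega
    simp at hτ
    linarith
  have hmem : C ∈ {c : ℕ | 1 ≤ c ∧ τ ≤ topSum π c} := ⟨hC, topSum_self.symm ▸ hτ⟩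
  obtain ⟨h1, hL⟩ := Nat.sInf_mem ⟨C, hmem⟩
  exact ⟨h1, Nat.sInf_le hmem, hL⟩

lemma topSum_Lgen_sub_one_lt (hτ0 : 0 < τ) (hτ : τ ≤ ∑ y, π y) :
    topSum π (Lgen π τ - 1) < τ := by
  obtain ⟨h1, -, -⟩ := Lgen_spec hτ0 hτ
  rcases h1.eq_or_lt with h | h
  · simpa [← h, topSum] using hτ0
  · have := Nat.notMem_of_lt_sInf (show Lgen π τ - 1 < Lgen π τ by omega)
    simp only [Set.mem_ofPred_eq, not_and, not_le] at this
    exact this (by omega)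

lemma sortedDesc_Lgen_sub_one_pos (hpos : ∀ y, 0 < π y) (hτ0 : 0 < τ) (hτ : τ ≤ ∑ y, π y) :
    0 < sortedDesc π (Lgen π τ - 1) := by
  obtain ⟨h1, hC, -⟩ := Lgen_spec hτ0 hτ
  rw [sortedDesc_of_lt (by omega)]
  exact hpos _

lemma Vgen_mem_Icc (hpos : ∀ y, 0 < π y) (hτ0 : 0 < τ) (hτ : τ ≤ ∑ y, π y) :
    Vgen π τ ∈ Set.Icc 0 1 := by
  obtain ⟨h1, -, hL⟩ := Lgen_spec hτ0 hτ
  have hp := sortedDesc_Lgen_sub_one_pos hpos hτ0 hτ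
  have hsplit : topSum π (Lgen π τ) = topSum π (Lgen π τ - 1) + sortedDesc π (Lgen π τ - 1) := by
    rw [topSum, topSum, ← sum_range_succ, Nat.sub_add_cancel h1]
  have := topSum_Lgen_sub_one_lt hτ0 hτ
  exact ⟨div_nonneg (by linarith) hp.le, (div_le_one hp).2 (by linarith)⟩

lemma card_Sgen (hinj : Function.Injective π) (hτ0 : 0 < τ) (hτ : τ ≤ ∑ y, π y) (u : ℝ) :
    #(Sgen u π τ) = if u ≤ Vgen π τ then Lgen π τ - 1 else Lgen π τ := by
  have hC := (Lgen_spec hτ0 hτ).2.1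
  unfold Sgen
  split_ifs <;> rw [card_topSet hinj, min_eq_right (by omega)]

lemma Lgen_sub_Vgen_le_sum (hpos : ∀ y, 0 < π y) (hτ0 : 0 < τ)
    (hτ : τ ≤ ∑ y, π y) (t : Fin C → ℝ) (ht0 : ∀ y, 0 ≤ t y) (ht1 : ∀ y, t y ≤ 1)
    (hcov : τ ≤ ∑ y, π y * t y) :
    (Lgen π τ : ℝ) - Vgen π τ ≤ ∑ y, t y := by
  obtain ⟨h1, hC, -⟩ := Lgen_spec hτ0 hτ
  have hp := sortedDesc_Lgen_sub_one_pos hpos hτ0 hτ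
  have hknap := sum_mul_le_sum_max_sub_add π t (sortedDesc π (Lgen π τ - 1)) ht0 ht1
  rw [sum_max_sub_sortedDesc h1 hC] at hknap
  rw [Vgen, sub_le_comm, le_div_iff₀ hp]
  linarith

end Quantile

/-- Optimality of the randomized oracle set: any randomized prediction set `Cset`
(a set-valued function of the uniform variable `U`) with coverage at least `τ`
has expected cardinality at least that of `S(U; π, τ)`. -/
theorem oracle_optimality {C : ℕ} (π : Fin C → ℝ)
    (hpos : ∀ y, 0 < π y) (hsum : ∑ y, π y = 1) (hinj : Function.Injective π)
    (τ : ℝ) (hτ : τ ∈ Set.Ioc (0 : ℝ) 1)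
    (μ : Measure (Fin C)) (hμ : ∀ y, μ {y} = ENNReal.ofReal (π y))
    (Cset : ℝ → Finset (Fin C))
    (hCmeas : ∀ y : Fin C, MeasurableSet {u : ℝ | y ∈ Cset u})
    (hcov : ENNReal.ofReal τ ≤
      (μ.prod (volume.restrict (Set.Icc (0 : ℝ) 1)))
        {p : Fin C × ℝ | p.1 ∈ Cset p.2}) :
    ∫⁻ u in Set.Icc (0 : ℝ) 1, ((Sgen u π τ).card : ENNReal) ∂volume ≤
      ∫⁻ u in Set.Icc (0 : ℝ) 1, ((Cset u).card : ENNReal) ∂volume := by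
  have hτ1 : τ ≤ ∑ y, π y := hsum ▸ hτ.2
  set m : Fin C → ℝ≥0∞ := fun y => volume.restrict (Set.Icc (0 : ℝ) 1) {u | y ∈ Cset u}
  have hm1 : ∀ y, m y ≤ 1 := fun y => (measure_mono (Set.subset_univ _)).trans (by simp)
  have hm : ∀ y, m y ≠ ∞ := fun y => ((hm1 y).trans_lt ENNReal.one_lt_top).ne
  have hterm : ∀ y, m y * μ {y} ≠ ∞ := fun y => ENNReal.mul_ne_top (hm y) (by simp [hμ])
  rw [prod_setOf_mem_eq_sum _ _ _ hCmeas, ENNReal.ofReal_le_iff_le_toReal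
    (ENNReal.sum_ne_top.2 fun y _ => hterm y), ENNReal.toReal_sum fun y _ => hterm y] at hcov
  simp_rw [card_Sgen hinj hτ.1 hτ1, lintegral_Icc_ite_natCast _ _ (Vgen_mem_Icc hpos hτ.1 hτ1),
    lintegral_card_eq_sum_measure _ _ hCmeas]
  rw [ENNReal.ofReal_le_iff_le_toReal (ENNReal.sum_ne_top.2 fun y _ => hm y),
    ENNReal.toReal_sum fun y _ => hm y]
  have hL := (Lgen_spec hτ.1 hτ1).1
  calc ((Lgen π τ - 1 : ℕ) : ℝ) * Vgen π τ + Lgen π τ * (1 - Vgen π τ)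
      = Lgen π τ - Vgen π τ := by push_cast [hL]; ring
    _ ≤ ∑ y, (m y).toReal := by
      refine Lgen_sub_Vgen_le_sum hpos hτ.1 hτ1 _ (fun _ => ENNReal.toReal_nonneg)
        (fun y => ENNReal.toReal_le_of_le_ofReal zero_le_one (by simpa using hm1 y)) ?_
      simpa [ENNReal.toReal_mul, hμ, (hpos _).le, mul_comm] using hcov
end
end
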